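/- arXiv:2112.14590 — 3 statements merged into one kernel-verified Lean document; each statement's English description precedes it below -/
import Mathlib

section
/- Let T : E → E be a linear map of a finite-dimensional complex vector space E, and suppose there exists a finite set S ⊆ E with T(S) ⊆ S whose span equals E. Then every eigenvalue of T is either 0 or a root of unity. -/
/-!
Since `T` maps the finite set `S` into itself, the pigeonhole principle gives two iterates
`T ^ m` and `T ^ n` (`m < n`) that agree on `S`, hence on its span, which is all of `E`.
An eigenvector for `μ` then gives `μ ^ m = μ ^ n`, so `μ = 0` or `μ ^ (n - m) = 1`.
-/

theorem Set.MapsTo.exists_lt_eqOn_iterate {α : Type*} {f : α → α} {s : Set α} (hs : s.Finite)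
    (hf : Set.MapsTo f s s) : ∃ m n : ℕ, m < n ∧ Set.EqOn f^[m] f^[n] s := by
  have := hs.to_subtype
  obtain ⟨m, n, hne, heq⟩ :=
    Finite.exists_ne_map_eq_of_infinite fun k : ℕ => (hf.iterate k).restrict
  have hEqOn : Set.EqOn f^[m] f^[n] s := fun x hx =>
    congrArg Subtype.val (congrFun heq ⟨x, hx⟩)
  rcases hne.lt_or_gt with hlt | hgt
  · exact ⟨m, n, hlt, hEqOn⟩
  · exact ⟨n, m, hgt, hEqOn.symm⟩

namespace Module.End

theorem exists_lt_pow_eq_pow_of_mapsTo {R M : Type*} [Semiring R] [AddCommMonoid M] [Module R M]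
    {T : End R M} {S : Set M} (hS : S.Finite) (hTS : Set.MapsTo T S S)
    (hspan : Submodule.span R S = ⊤) : ∃ m n : ℕ, m < n ∧ T ^ m = T ^ n := by
  obtain ⟨m, n, hlt, hEqOn⟩ := hTS.exists_lt_eqOn_iterate hS
  refine ⟨m, n, hlt, LinearMap.ext_on hspan ?_⟩
  simpa only [coe_pow] using hEqOn

theorem HasEigenvalue.pow_eq_pow_of_pow_eq_pow {K M : Type*} [Field K] [AddCommGroup M]
    [Module K M] {T : End K M} {μ : K} (hμ : T.HasEigenvalue μ) {m n : ℕ}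
    (hT : T ^ m = T ^ n) : μ ^ m = μ ^ n := by
  obtain ⟨v, hv⟩ := hμ.exists_hasEigenvector
  refine smul_left_injective K hv.2 ?_
  simp only [← hv.pow_apply, hT]

end Module.End

theorem eigenvalues_zero_or_root_of_unity_general
    (E : Type*) [AddCommGroup E] [Module ℂ E]
    (T : E →ₗ[ℂ] E) (S : Set E) (hSfin : S.Finite) (hTS : T '' S ⊆ S)
    (hspan : Submodule.span ℂ S = ⊤) :
    ∀ μ : ℂ, Module.End.HasEigenvalue T μ → μ = 0 ∨ ∃ n : ℕ, 0 < n ∧ μ ^ n = 1 := by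
  intro μ hμ
  obtain ⟨m, n, hlt, hT⟩ :=
    Module.End.exists_lt_pow_eq_pow_of_mapsTo hSfin (Set.mapsTo_iff_image_subset.2 hTS) hspan
  have hμpow : μ ^ m = μ ^ n := hμ.pow_eq_pow_of_pow_eq_pow hT
  rcases eq_or_ne μ 0 with hμ0 | hμ0
  · exact .inl hμ0
  · refine .inr ⟨n - m, Nat.sub_pos_of_lt hlt, ?_⟩
    rw [pow_sub₀ μ hμ0 hlt.le, ← hμpow, mul_inv_cancel₀ (pow_ne_zero m hμ0)]

theorem eigenvalues_zero_or_root_of_unity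
    (E : Type*) [AddCommGroup E] [Module ℂ E] [FiniteDimensional ℂ E]
    (T : E →ₗ[ℂ] E) (S : Set E) (hSfin : S.Finite) (hTS : T '' S ⊆ S)
    (hspan : Submodule.span ℂ S = ⊤) :
    ∀ μ : ℂ, Module.End.HasEigenvalue T μ → μ = 0 ∨ ∃ n : ℕ, 0 < n ∧ μ ^ n = 1 :=
  eigenvalues_zero_or_root_of_unity_general E T S hSfin hTS hspan
end

section
/- Let T : E → E be a linear map of a finite-dimensional complex vector space, S ⊆ E a finite spanning set with T(S) ⊆ S. If v ∈ E is an eigenvector of T with eigenvalue λ, then the orbit {Tⁿ(v) : n ≥ 0} = {λⁿ v : n ≥ 0} is a finite set. -/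
/- The powers of `T` map the finite spanning set `S` into itself, and a linear map is determined by
its values on `S`; so `n ↦ T ^ n` takes only finitely many values, and the orbit of `v` is the image
of these under evaluation at `v`. -/

namespace Module.End

variable {R M : Type*} [Semiring R] [AddCommMonoid M] [Module R M]

theorem finite_range_pow_of_mapsTo {f : Module.End R M} {s : Set M} (hs : s.Finite)
    (hfs : Set.MapsTo f s s) (hspan : Submodule.span R s = ⊤) :
    (Set.range fun n : ℕ => f ^ n).Finite := by
  have : Finite s := hs.to_subtype
  let restrictToSet : Module.End R M → s → M := fun g x => g x
  have hinj : Function.Injective restrictToSet := fun g h hgh =>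
    LinearMap.ext_on hspan fun x hx => congrFun hgh ⟨x, hx⟩
  refine Set.Finite.of_finite_image ?_ hinj.injOn
  refine (Set.Finite.pi' fun _ : s => hs).subset ?_
  rintro _ ⟨_, ⟨n, rfl⟩, rfl⟩ x
  simpa only [restrictToSet, coe_pow] using hfs.iterate n x.2

end Module.End

theorem orbit_of_eigenvector_finite_general
    (E : Type*) [AddCommGroup E] [Module ℂ E]
    (T : E →ₗ[ℂ] E) (S : Set E) (hSfin : S.Finite) (hTS : T '' S ⊆ S)
    (hspan : Submodule.span ℂ S = ⊤)
    (v : E) (hv : v ≠ 0) (μ : ℂ) (heig : T v = μ • v) :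
    (Set.range fun n : ℕ => (T ^ n) v) = (Set.range fun n : ℕ => μ ^ n • v) ∧
      (Set.range fun n : ℕ => (T ^ n) v).Finite := by
  have hvec : Module.End.HasEigenvector T μ v :=
    Module.End.hasEigenvector_iff.mpr ⟨Module.End.mem_eigenspace_iff.mpr heig, hv⟩
  refine ⟨by simp only [hvec.pow_apply], ?_⟩
  rw [Set.range_comp' (fun g : Module.End ℂ E => g v)]
  exact (Module.End.finite_range_pow_of_mapsTo hSfin (Set.mapsTo_iff_image_subset.mpr hTS)
    hspan).image _

theorem orbit_of_eigenvector_finite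
    (E : Type*) [AddCommGroup E] [Module ℂ E] [FiniteDimensional ℂ E]
    (T : E →ₗ[ℂ] E) (S : Set E) (hSfin : S.Finite) (hTS : T '' S ⊆ S)
    (hspan : Submodule.span ℂ S = ⊤)
    (v : E) (hv : v ≠ 0) (μ : ℂ) (heig : T v = μ • v) :
    (Set.range fun n : ℕ => (T ^ n) v) = (Set.range fun n : ℕ => μ ^ n • v) ∧
      (Set.range fun n : ℕ => (T ^ n) v).Finite :=
  orbit_of_eigenvector_finite_general E T S hSfin hTS hspan v hv μ heig
end

section
/- Let w₀ and w₁ be finite binary words each beginning with the prefix '10'. Then the recoding map R (defined by the block substitutions σ) satisfies R(w₀ · w₁) = R(w₀) · R(w₁), where · denotes concatenation and R on finite words is defined by recoding the periodic extension and truncating to the original length. -/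
/-- `σ(1^{2k}) = (12)^k`, `σ(1^{2k-1}) = 2(12)^{k-1}`. -/
def sigmaOne (m : ℕ) : List ℕ :=
  if m % 2 = 0 then (List.replicate (m / 2) ([1, 2] : List ℕ)).flatten
  else 2 :: (List.replicate (m / 2) ([1, 2] : List ℕ)).flatten

/-- The recoding map `R` on (possibly infinite tails of) binary words, acting on each
maximal run: runs of `0`s are unchanged and runs of `1`s are replaced via `sigmaOne`. -/
def recode (w : List ℕ) : List ℕ :=
  ((w.splitBy (· == ·)).map
    (fun run => if run.head? = some 1 then sigmaOne run.length else run)).flatten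

/-- The recoding map on a finite word `w` (where `w^∞` is a critical itinerary):
recode the periodic extension of `w` and truncate to the original length. -/
def recodeFin (w : List ℕ) : List ℕ := (recode (w ++ w)).take w.length

namespace RecodeAux

open List

theorem splitBy_loop_eq_append {α : Type*} {r : α → α → Bool} {l : List α} {a : α} {g : List α}
    (gs : List (List α)) :
    splitBy.loop r l a g gs = gs.reverse ++ splitBy.loop r l a g [] := by
  induction l generalizing a g gs with
  | nil => simp [splitBy.loop]
  | cons b l IH =>
    simp_rw [splitBy.loop]
    split <;> rw [IH]
    conv_rhs => rw [IH]
    simp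

theorem splitBy_loop_append {α : Type*} {r : α → α → Bool} :
    ∀ (l₁ : List α) (a c : α) (l₂ g : List α),
      r ((a :: l₁).getLast (cons_ne_nil _ _)) c = false →
      splitBy.loop r (l₁ ++ c :: l₂) a g [] =
        splitBy.loop r l₁ a g [] ++ splitBy.loop r l₂ c [] [] := by
  intro l₁
  induction l₁ with
  | nil =>
    intro a c l₂ g h
    simp only [getLast_singleton] at h
    simp only [nil_append]
    rw [splitBy.loop, h, splitBy_loop_eq_append [(a :: g).reverse]]
    simp [splitBy.loop]
  | cons b l₁ IH =>
    intro a c l₂ g h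
    have h' : r ((b :: l₁).getLast (cons_ne_nil _ _)) c = false := by
      rwa [getLast_cons (cons_ne_nil _ _)] at h
    simp only [cons_append]
    rw [splitBy.loop, splitBy.loop]
    cases hrab : r a b with
    | true => exact IH b c l₂ (a :: g) h'
    | false =>
      rw [splitBy_loop_eq_append [(a :: g).reverse], IH b c l₂ [] h',
        splitBy_loop_eq_append [(a :: g).reverse]]
      simp

theorem splitBy_append {α : Type*} {r : α → α → Bool} {l₁ l₂ : List α}
    (h₁ : l₁ ≠ []) (h₂ : l₂ ≠ [])
    (h : r (l₁.getLast h₁) (l₂.head h₂) = false) :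
    (l₁ ++ l₂).splitBy r = l₁.splitBy r ++ l₂.splitBy r := by
  cases l₁ with
  | nil => exact absurd rfl h₁
  | cons a t =>
    cases l₂ with
    | nil => exact absurd rfl h₂
    | cons c t₂ =>
      simp only [head_cons] at h
      simpa only [cons_append, splitBy] using splitBy_loop_append t a c t₂ [] h

theorem recode_append {l₁ l₂ : List ℕ} (h₁ : l₁ ≠ []) (h₂ : l₂ ≠ [])
    (h : (l₁.getLast h₁ == l₂.head h₂) = false) :
    recode (l₁ ++ l₂) = recode l₁ ++ recode l₂ := by
  unfold recode
  rw [splitBy_append h₁ h₂ h, map_append, flatten_append]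

theorem length_sigmaOne (m : ℕ) : (sigmaOne m).length = m := by
  unfold sigmaOne
  split <;> simp_all <;> omega

theorem length_recode (w : List ℕ) : (recode w).length = w.length := by
  conv_rhs => rw [← flatten_splitBy (· == ·) w]
  unfold recode
  rw [length_flatten, length_flatten, map_map]
  congr 1
  have : ((fun (run : List ℕ) =>
      if run.head? = some 1 then sigmaOne run.length else run) · |>.length) =
      fun (run : List ℕ) => run.length := by
    funext run
    simp only
    split
    · exact length_sigmaOne _
    · rfl
  rw [Function.comp_def, this]

theorem flatten_replicate_getLast? (k : ℕ) :
    ((List.replicate (k + 1) ([1, 2] : List ℕ)).flatten).getLast? = some 2 := by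
  induction k with
  | zero => rfl
  | succ k IH =>
    rw [replicate_succ, flatten_cons, getLast?_append, IH]
    rfl

theorem sigmaOne_getLast? (m : ℕ) (h : m ≠ 0) : (sigmaOne m).getLast? = some 2 := by
  unfold sigmaOne
  split
  · obtain ⟨k, hk⟩ : ∃ k, m / 2 = k + 1 := ⟨m / 2 - 1, by omega⟩
    rw [hk]; exact flatten_replicate_getLast? k
  · rcases Nat.eq_zero_or_pos (m / 2) with h2 | h2
    · rw [h2]; rfl
    · obtain ⟨k, hk⟩ : ∃ k, m / 2 = k + 1 := ⟨m / 2 - 1, by omega⟩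
      rw [hk, getLast?_cons, flatten_replicate_getLast? k]
      rfl

theorem head?_of_chain'_getLast? {l : List ℕ} (hc : l.Chain' (fun x y => x == y))
    {x : ℕ} (hl : l.getLast? = some x) : l.head? = some x := by
  induction l with
  | nil => simp at hl
  | cons a t IH =>
    cases t with
    | nil => simpa using hl
    | cons b t₂ =>
      rw [Chain', isChain_cons] at hc
      have hb : (b :: t₂).head? = some x := IH hc.2 (by simpa using hl)
      simp only [head?_cons, Option.some.injEq] at hb ⊢
      have : a = b := by simpa using hc.1
      omega

theorem recode_concat_getLast? (u : List ℕ) : (recode (u ++ [1])).getLast? = some 2 := by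
  set w : List ℕ := u ++ [1] with hw
  have hwne : w ≠ [] := by simp [hw]
  have hsne : w.splitBy (· == ·) ≠ [] := by
    intro h
    have := flatten_splitBy (fun x y : ℕ => x == y) w
    rw [h] at this
    exact hwne this.symm
  set s := w.splitBy (· == ·) with hs
  set B := s.getLast hsne with hB
  have hBmem : B ∈ s := getLast_mem hsne
  have hBne : B ≠ [] := ne_nil_of_mem_splitBy hBmem
  have hsplit : s = s.dropLast ++ [B] := (dropLast_append_getLast hsne).symm
  have hwlast : w.getLast? = some 1 := by
    rw [hw, getLast?_append]; rfl
  have hBlast : B.getLast? = some 1 := by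
    have hfl : s.flatten = w := flatten_splitBy _ _
    rw [← hfl, hsplit, flatten_append, flatten_cons, flatten_nil, append_nil,
      getLast?_append, getLast?_eq_getLast hBne] at hwlast
    rw [getLast?_eq_getLast hBne]
    simpa using hwlast
  have hBhead : B.head? = some 1 :=
    head?_of_chain'_getLast? (isChain_of_mem_splitBy hBmem) hBlast
  have hBlen : B.length ≠ 0 := fun h => hBne (length_eq_zero_iff.mp h)
  show (recode w).getLast? = some 2
  unfold recode
  rw [← hs, hsplit, map_append, flatten_append, getLast?_append, map_cons, map_nil,
    flatten_cons, flatten_nil, append_nil, if_pos hBhead, sigmaOne_getLast? _ hBlen]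
  rfl

theorem recode_concat_eq (u : List ℕ) :
    recode (u ++ [1]) = (recode (u ++ [1])).take u.length ++ [2] := by
  set l := recode (u ++ [1]) with hl
  have hlen : l.length = u.length + 1 := by rw [hl, length_recode]; simp
  have hne : l ≠ [] := by intro h; rw [h] at hlen; simp at hlen
  have h2 : l.getLast hne = 2 := by
    have h3 := recode_concat_getLast? u
    rw [← hl, getLast?_eq_getLast hne] at h3
    simpa using h3
  conv_lhs => rw [← dropLast_append_getLast hne]
  rw [h2, dropLast_eq_take, hlen]
  simp

theorem recode_key (u v : List ℕ) :
    recode (u ++ 1 :: 0 :: v) =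
      (recode (u ++ [1])).take u.length ++ recode (1 :: 0 :: v) := by
  have h1 : u ++ 1 :: 0 :: v = (u ++ [1]) ++ 0 :: v := by simp
  have hne : u ++ [1] ≠ [] := by simp
  have hlast : ((u ++ [1]).getLast hne == (0 :: v).head (cons_ne_nil _ _)) = false := by
    have h4 := getLast?_eq_getLast (l := u ++ [1]) hne
    rw [getLast?_append] at h4
    have h6 : (u ++ [1]).getLast hne = 1 := by
      simpa [Option.or] using h4.symm
    rw [h6]
    rfl
  rw [h1, recode_append hne (cons_ne_nil _ _) hlast]
  have h2 : recode (1 :: 0 :: v) = [2] ++ recode (0 :: v) := by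
    have h5 : (1 :: 0 :: v : List ℕ) = [1] ++ 0 :: v := rfl
    rw [h5, recode_append (cons_ne_nil _ _) (cons_ne_nil _ _) (by rfl)]
    rfl
  rw [h2]
  conv_lhs => rw [recode_concat_eq u]
  simp [append_assoc]

end RecodeAux

/-- If `w₀`, `w₁` are finite binary words both starting with `10`, then
`R(w₀ · w₁) = R(w₀) · R(w₁)`. -/
theorem recodeFin_append (w₀ w₁ : List ℕ)
    (hb₀ : ∀ a ∈ w₀, a = 0 ∨ a = 1) (hb₁ : ∀ a ∈ w₁, a = 0 ∨ a = 1)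
    (hp₀ : w₀.take 2 = [1, 0]) (hp₁ : w₁.take 2 = [1, 0]) :
    recodeFin (w₀ ++ w₁) = recodeFin w₀ ++ recodeFin w₁ := by
  clear hb₀ hb₁
  obtain ⟨u₀, hw₀⟩ : ∃ u, w₀ = 1 :: 0 :: u := by
    match w₀, hp₀ with
    | 1 :: 0 :: t, _ => exact ⟨t, rfl⟩
  obtain ⟨u₁, hw₁⟩ : ∃ u, w₁ = 1 :: 0 :: u := by
    match w₁, hp₁ with
    | 1 :: 0 :: t, _ => exact ⟨t, rfl⟩
  set A := (recode (w₀ ++ [1])).take w₀.length with hA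
  set B := (recode (w₁ ++ [1])).take w₁.length with hB
  have lenA : A.length = w₀.length := by
    rw [hA, List.length_take, RecodeAux.length_recode, List.length_append]
    simp
  have lenB : B.length = w₁.length := by
    rw [hB, List.length_take, RecodeAux.length_recode, List.length_append]
    simp
  have r0 : recodeFin w₀ = A := by
    rw [recodeFin]
    nth_rewrite 3 [hw₀]
    rw [RecodeAux.recode_key, ← hA, List.take_left' lenA]
  have r1 : recodeFin w₁ = B := by
    rw [recodeFin]
    nth_rewrite 3 [hw₁]
    rw [RecodeAux.recode_key, ← hB, List.take_left' lenB]
  have e1 : (w₀ ++ w₁) ++ (w₀ ++ w₁) = w₀ ++ (1 :: 0 :: (u₁ ++ (w₀ ++ w₁))) := by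
    simp [hw₀, hw₁]
  have e2 : (1 :: 0 :: (u₁ ++ (w₀ ++ w₁)) : List ℕ) = w₁ ++ (1 :: 0 :: (u₀ ++ w₁)) := by
    simp [hw₀, hw₁]
  rw [recodeFin, e1, RecodeAux.recode_key, ← hA, e2, RecodeAux.recode_key, ← hB,
    r0, r1, List.length_append, ← lenA, List.take_append, List.take_of_length_le (by omega), Nat.add_sub_cancel_left,
    List.take_left' lenB]
end
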